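/- arXiv:1907.03362 — 4 statements merged into one kernel-verified Lean document; each statement's English description precedes it below -/
import Mathlib

section
/- Let b_x, b_y be real numbers with (1 − b_x − b_y)²/4 + b_x < 0. Then there exists no pair of real numbers (X, Y) satisfying X − X·Y + b_x = 0 and X·Y − Y + b_y = 0; i.e., the open Lotka–Volterra system has no stationary solutions at all. -/
/-- If `(1 − bx − by)²/4 + bx < 0`, the open Lotka–Volterra system has no
stationary solutions at all. -/
theorem lv_open_no_stationary_point
    (bx by_ : ℝ) (hD : (1 - bx - by_) ^ 2 / 4 + bx < 0) :
    ¬ ∃ X Y : ℝ, X - X * Y + bx = 0 ∧ X * Y - Y + by_ = 0 := by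
  rintro ⟨X, Y, h1, h2⟩
  have hY : Y = X + bx + by_ := by linarith
  subst hY
  nlinarith [sq_nonneg (X - (1 - bx - by_) / 2)]
end

section
/- Regular adding of preys stabilizes the Lotka–Volterra system: for any b_x > 0 and b_y = 0, the point (X*, Y*) = (1, 1 + b_x) is a stationary point of the open Lotka–Volterra system with X* > 0, Y* > 0, and all eigenvalues of the Jacobian matrix J = [[1 − Y*, −X*], [Y*, X* − 1]] have negative real part. -/
lemma quad_root_re_neg (b c : ℝ) (hb : 0 < b) (hc : 0 < c) (μ : ℂ)
    (h : μ^2 + (b:ℂ)*μ + (c:ℂ) = 0) : μ.re < 0 := by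
  have hre := congrArg Complex.re h
  have him := congrArg Complex.im h
  set x := μ.re; set y := μ.im
  simp [Complex.add_re, Complex.add_im, pow_two, Complex.mul_re, Complex.mul_im,
    Complex.ofReal_re, Complex.ofReal_im] at hre him
  -- hre : x*x - y*y + b*x + c = 0 (some form), him : x*y + y*x + b*y = 0
  rcases eq_or_ne y 0 with hy | hy
  · by_contra hx
    push_neg at hx
    nlinarith [hre, hy, him]
  · have h2 : 2*x + b = 0 := by
      have : y * (2*x + b) = 0 := by nlinarith
      rcases mul_eq_zero.mp this with h | h
      · exact absurd h hy
      · exact h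
    linarith

/-- Regular adding of preys (`bx > 0`, `by = 0`) stabilizes the Lotka–Volterra
system: `(1, 1 + bx)` is a positive stationary point and all eigenvalues of the
Jacobian there have negative real part. -/
theorem lv_adding_preys_stabilizes
    (bx by_ : ℝ) (hbx : 0 < bx) (hby : by_ = 0) :
    let Xs : ℝ := 1
    let Ys : ℝ := 1 + bx
    (0 < Xs ∧ 0 < Ys ∧ Xs - Xs * Ys + bx = 0 ∧ Xs * Ys - Ys + by_ = 0) ∧
    ∀ μ ∈ spectrum ℂ ((!![1 - Ys, -Xs; Ys, Xs - 1]).map Complex.ofReal),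
      μ.re < 0 := by
  intro Xs Ys
  constructor
  · refine ⟨one_pos, by positivity, by ring, by rw [hby]; ring⟩
  · intro μ hμ
    have hmap : (!![1 - Ys, -Xs; Ys, Xs - 1]).map Complex.ofReal
        = !![((1 - Ys : ℝ) : ℂ), ((-Xs : ℝ) : ℂ); ((Ys : ℝ) : ℂ), ((Xs - 1 : ℝ) : ℂ)] := by
      ext i j
      fin_cases i <;> fin_cases j <;> simp [Matrix.map_apply]
    rw [hmap, spectrum.mem_iff, Matrix.isUnit_iff_isUnit_det, isUnit_iff_ne_zero,
      not_not, Matrix.det_fin_two] at hμ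
    simp [Matrix.algebraMap_eq_diagonal, Matrix.diagonal, Complex.coe_algebraMap] at hμ
    have hpoly : μ^2 + (bx:ℂ)*μ + ((1+bx:ℝ):ℂ) = 0 := by
      simp only [Xs, Ys] at hμ
      push_cast at hμ ⊢
      ring_nf at hμ ⊢
      linear_combination hμ
    exact quad_root_re_neg bx (1+bx) hbx (by linarith) μ hpoly
end

section
/- Regular hunting of preys destabilizes the Lotka–Volterra system: for any b_x with −1 < b_x < 0 and b_y = 0, the point (X*, Y*) = (1, 1 + b_x) is a stationary point of the open Lotka–Volterra system with X* > 0, Y* > 0, and the Jacobian matrix J = [[1 − Y*, −X*], [Y*, X* − 1]] has an eigenvalue with positive real part. -/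
/-! Since the trace of a complex matrix is the sum of its eigenvalues, a matrix whose trace has
positive real part has an eigenvalue with positive real part. At the stationary point
`(1, 1 + bx)` the Jacobian has trace `-bx > 0`. -/

theorem Matrix.exists_mem_spectrum_re_pos_of_trace_re_pos {n : Type*} [Fintype n] [DecidableEq n]
    (A : Matrix n n ℂ) (h : 0 < A.trace.re) : ∃ μ ∈ spectrum ℂ A, 0 < μ.re := by
  by_contra! hre
  have hroots : ∀ x ∈ A.charpoly.roots.map Complex.re, x ≤ 0 := by
    simp only [Multiset.mem_map]
    rintro _ ⟨μ, hμ, rfl⟩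
    exact hre μ (A.mem_spectrum_of_isRoot_charpoly (Polynomial.isRoot_of_mem_roots hμ))
  have htrace : A.trace.re = (A.charpoly.roots.map Complex.re).sum := by
    rw [A.trace_eq_sum_roots_charpoly, ← Complex.coe_reAddGroupHom, map_multiset_sum]
  have hsum : (A.charpoly.roots.map Complex.re).sum ≤ 0 := by
    simpa using Multiset.sum_le_card_nsmul _ 0 hroots
  exact h.not_ge (htrace ▸ hsum)

/-- Regular hunting of preys (`−1 < bx < 0`, `by = 0`) destabilizes the
Lotka–Volterra system: `(1, 1 + bx)` is a positive stationary point and the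
Jacobian there has an eigenvalue with positive real part. -/
theorem lv_hunting_preys_destabilizes
    (bx by_ : ℝ) (hbx₁ : -1 < bx) (hbx₂ : bx < 0) (hby : by_ = 0) :
    let Xs : ℝ := 1
    let Ys : ℝ := 1 + bx
    (0 < Xs ∧ 0 < Ys ∧ Xs - Xs * Ys + bx = 0 ∧ Xs * Ys - Ys + by_ = 0) ∧
    ∃ μ ∈ spectrum ℂ ((!![1 - Ys, -Xs; Ys, Xs - 1]).map Complex.ofReal),
      0 < μ.re := by
  intro Xs Ys
  refine ⟨⟨one_pos, by linarith, by ring, by rw [hby]; ring⟩,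
    Matrix.exists_mem_spectrum_re_pos_of_trace_re_pos _ ?_⟩
  simp [Matrix.trace_fin_two, Xs, Ys]
  linarith
end

section
/- Regular adding of predators below threshold stabilizes the Lotka–Volterra system: for b_x = 0 and any b_y with 0 < b_y < 1, the point (X*, Y*) = (1 − b_y, 1) is a stationary point of the open Lotka–Volterra system with X* > 0, Y* > 0, and all eigenvalues of the Jacobian matrix J = [[1 − Y*, −X*], [Y*, X* − 1]] have negative real part. -/
/-- Regular adding of predators below threshold (`bx = 0`, `0 < by < 1`)
stabilizes the Lotka–Volterra system: `(1 − by, 1)` is a positive stationary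
point and all eigenvalues of the Jacobian there have negative real part. -/
theorem lv_adding_predators_below_threshold_stabilizes
    (bx by_ : ℝ) (hbx : bx = 0) (hby₁ : 0 < by_) (hby₂ : by_ < 1) :
    let Xs : ℝ := 1 - by_
    let Ys : ℝ := 1
    (0 < Xs ∧ 0 < Ys ∧ Xs - Xs * Ys + bx = 0 ∧ Xs * Ys - Ys + by_ = 0) ∧
    ∀ μ ∈ spectrum ℂ ((!![1 - Ys, -Xs; Ys, Xs - 1]).map Complex.ofReal),
      μ.re < 0 := by
  intro Xs Ys
  refine ⟨⟨by simp only [Xs]; linarith, by norm_num [Ys], by simp only [Xs, Ys, hbx]; ring, by simp only [Xs, Ys]; ring⟩, ?_⟩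
  intro μ hμ
  rw [spectrum.mem_iff] at hμ
  -- turn non-invertibility into vanishing determinant
  have hdet : (algebraMap ℂ (Matrix (Fin 2) (Fin 2) ℂ) μ -
      (!![1 - Ys, -Xs; Ys, Xs - 1]).map Complex.ofReal).det = 0 := by
    by_contra h
    exact hμ ((Matrix.isUnit_iff_isUnit_det _).2 (isUnit_iff_ne_zero.2 h))
  have key : μ ^ 2 + (by_ : ℂ) * μ + (1 - (by_ : ℂ)) = 0 := by
    rw [Matrix.det_fin_two] at hdet
    simp [Matrix.algebraMap_matrix_apply, Matrix.map_apply, Xs, Ys] at hdet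
    ring_nf at hdet ⊢
    linear_combination hdet
  -- split into real and imaginary parts
  set x := μ.re with hx
  set y := μ.im with hy
  have hre : x ^ 2 - y ^ 2 + by_ * x + (1 - by_) = 0 := by
    have := congrArg Complex.re key
    simp [pow_two, Complex.mul_re, Complex.add_re, Complex.sub_re, Complex.ofReal_re,
      Complex.ofReal_im, ← hx, ← hy] at this
    ring_nf at this ⊢
    linarith
  have him : y * (2 * x + by_) = 0 := by
    have := congrArg Complex.im key
    simp [pow_two, Complex.mul_im, Complex.add_im, Complex.sub_im, Complex.ofReal_re,
      Complex.ofReal_im, ← hx, ← hy] at this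
    ring_nf at this ⊢
    linarith
  rcases mul_eq_zero.1 him with h0 | h0
  · -- y = 0 : real eigenvalue
    have hxe : x * (x + by_) = by_ - 1 := by nlinarith [hre, h0]
    by_contra hxn
    push_neg at hxn
    nlinarith
  · -- y ≠ 0 path gives x = -by_/2 < 0
    have : x = -by_ / 2 := by linarith
    rw [this]; linarith
end
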